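/- Suppose ψ₀, ψ₁ are holomorphic on 𝔻, β unimodular, λ ∈ 𝔻\{0}, and the identity ψ₀(u)/(1−u conj z) + ψ₁(u)·conj(z)/(1−u conj z)² = conj(β κ(z))·[ψ₀(conj φ(z))·(J_{β,λ}K_{conj φ(z)})(u) + ψ₁(conj φ(z))·(J_{β,λ}K_{conj φ(z)}^{[1]})(u)] holds for all z, u ∈ 𝔻. Then ψ₀(u) = a + bu and ψ₁(u) = d + cu + bu² where a, b, c ∈ ℂ and d = −λb/conj(λ) − λc. -/

import Mathlib

open Complex ComplexConjugate Metric Filter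

noncomputable section

/-- The Hardy space `H²`, modeled as the space of square-summable Taylor coefficient
sequences, i.e. `ℓ²(ℕ, ℂ)`, with inner product `⟨f,g⟩ = Σₙ aₙ conj(bₙ)`. -/
abbrev H2 := lp (fun _ : ℕ => ℂ) 2

/-- The holomorphic function on the unit disk associated to an element of `H²`. -/
def H2.toFun (f : H2) (z : ℂ) : ℂ := ∑' n, f n * z ^ n

/-- The open unit disk. -/
def 𝔻 : Set ℂ := Metric.ball (0 : ℂ) 1

/-- The weight `κ(z) = √(1−|λ|²)/(1−z·conj λ)`. -/
def kappa (l : ℂ) (z : ℂ) : ℂ := (Real.sqrt (1 - ‖l‖ ^ 2) : ℂ) / (1 - z * conj l)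

/-- The disk automorphism `φ(z) = (conj λ/λ)·(λ−z)/(1−z·conj λ)`. -/
def phi (l : ℂ) (z : ℂ) : ℂ := (conj l / l) * ((l - z) / (1 - z * conj l))

/-- The weighted composition conjugation `J_{β,λ}` on `H²`, described through its action
on the represented functions. -/
def IsJ (beta l : ℂ) (J : H2 → H2) : Prop :=
  ∀ f : H2, ∀ z ∈ 𝔻, H2.toFun (J f) z = beta * kappa l z * conj (H2.toFun f (conj (phi l z)))

/-!
Only the instances `z = 0` and `z = λ` of the identity are needed. For `z = 0` the kernels
are evaluated at `conj φ(0) = λ`, where `1 - λ φ(u) = (1 - |λ|²)/(1 - u conj λ)` cancels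
the weights `κ`, so `ψ₀` is affine. For `z = λ` they are evaluated at `conj φ(λ) = 0`, where
`φ(u) (1 - u conj λ) = conj λ (λ - u)/λ`; solving for `ψ₁` and inserting the affine `ψ₀`
gives the quadratic, with `d = ψ₁(0)` and `c = -ψ₁(0)/λ - b/conj λ`.
-/

@[simp]
lemma mem_𝔻 {w : ℂ} : w ∈ 𝔻 ↔ ‖w‖ < 1 := mem_ball_zero_iff

lemma conj_mem_𝔻 {w : ℂ} (hw : w ∈ 𝔻) : conj w ∈ 𝔻 := by simpa using hw

lemma one_sub_mul_conj_ne_zero {u l : ℂ} (hu : u ∈ 𝔻) (hl : l ∈ 𝔻) : 1 - u * conj l ≠ 0 := by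
  rw [sub_ne_zero]
  intro h
  have : ‖u * conj l‖ < 1 := by
    rw [norm_mul, RCLike.norm_conj]
    exact mul_lt_one_of_nonneg_of_lt_one_left (norm_nonneg _) (mem_𝔻.1 hu) (mem_𝔻.1 hl).le
  simp [← h] at this

lemma norm_sub_lt_norm_one_sub_mul_conj {u l : ℂ} (hu : u ∈ 𝔻) (hl : l ∈ 𝔻) :
    ‖l - u‖ < ‖1 - u * conj l‖ := by
  have key : normSq (1 - u * conj l) - normSq (l - u) = (1 - normSq u) * (1 - normSq l) := by
    simp only [normSq_apply, sub_re, sub_im, mul_re, mul_im, one_re, one_im, conj_re, conj_im]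
    ring
  rw [mem_𝔻, ← sq_lt_one_iff₀ (norm_nonneg _), ← normSq_eq_norm_sq] at hu hl
  rw [← sq_lt_sq₀ (norm_nonneg _) (norm_nonneg _), ← normSq_eq_norm_sq, ← normSq_eq_norm_sq]
  nlinarith [mul_pos (sub_pos.2 hu) (sub_pos.2 hl)]

lemma phi_mem_𝔻 {l u : ℂ} (hl : l ∈ 𝔻) (hu : u ∈ 𝔻) : phi l u ∈ 𝔻 := by
  have hlt := norm_sub_lt_norm_one_sub_mul_conj hu hl
  have hunit : ‖conj l / l‖ ≤ 1 := by
    rw [norm_div, RCLike.norm_conj]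
    exact div_self_le_one _
  rw [mem_𝔻, phi, norm_mul, norm_div (l - u)]
  calc ‖conj l / l‖ * (‖l - u‖ / ‖1 - u * conj l‖) ≤ ‖l - u‖ / ‖1 - u * conj l‖ :=
        mul_le_of_le_one_left (by positivity) hunit
    _ < 1 := (div_lt_one ((norm_nonneg _).trans_lt hlt)).2 hlt

lemma conj_phi_zero {l : ℂ} (hl0 : l ≠ 0) : conj (phi l 0) = l := by
  simp [phi, hl0]

lemma phi_self (l : ℂ) : phi l l = 0 := by
  simp [phi]

lemma phi_eq {l u : ℂ} (hl0 : l ≠ 0) (hd : 1 - u * conj l ≠ 0) :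
    phi l u = conj l * (l - u) / (l * (1 - u * conj l)) := by
  rw [mul_comm u] at hd
  rw [phi]
  field_simp

lemma one_sub_mul_phi {l u : ℂ} (hl0 : l ≠ 0) (hd : 1 - u * conj l ≠ 0) :
    1 - l * phi l u = (1 - l * conj l) / (1 - u * conj l) := by
  rw [mul_comm u] at hd
  rw [phi]
  field_simp
  ring

lemma conj_kappa_mul_kappa {l : ℂ} (hl : l ∈ 𝔻) (z u : ℂ) :
    conj (kappa l z) * kappa l u = (1 - l * conj l) / ((1 - conj z * l) * (1 - u * conj l)) := by
  have hsq : (Real.sqrt (1 - ‖l‖ ^ 2) : ℂ) * (Real.sqrt (1 - ‖l‖ ^ 2) : ℂ) = 1 - l * conj l := by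
    have : (0 : ℝ) ≤ 1 - ‖l‖ ^ 2 := by nlinarith [norm_nonneg l, mem_𝔻.1 hl]
    rw [← ofReal_mul, Real.mul_self_sqrt this, mul_conj, normSq_eq_norm_sq]
    push_cast
    ring
  simp only [kappa, map_div₀, conj_ofReal, map_sub, map_one, map_mul, conj_conj]
  rw [div_mul_div_comm, hsq]

section

variable {beta l w u : ℂ} {J : H2 → H2} {f : H2}

lemma IsJ.toFun_kernel (hJ : IsJ beta l J) (hl : l ∈ 𝔻) (hu : u ∈ 𝔻)
    (hf : ∀ v ∈ 𝔻, H2.toFun f v = 1 / (1 - conj w * v)) :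
    H2.toFun (J f) u = beta * kappa l u / (1 - w * phi l u) := by
  rw [hJ f u hu, hf _ (conj_mem_𝔻 (phi_mem_𝔻 hl hu))]
  simp only [map_div₀, map_one, map_sub, map_mul, conj_conj]
  ring

lemma IsJ.toFun_kernel1 (hJ : IsJ beta l J) (hl : l ∈ 𝔻) (hu : u ∈ 𝔻)
    (hf : ∀ v ∈ 𝔻, H2.toFun f v = v / (1 - conj w * v) ^ 2) :
    H2.toFun (J f) u = beta * kappa l u * phi l u / (1 - w * phi l u) ^ 2 := by
  rw [hJ f u hu, hf _ (conj_mem_𝔻 (phi_mem_𝔻 hl hu))]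
  simp only [map_div₀, map_pow, map_sub, map_one, map_mul, conj_conj]
  ring

lemma IsJ.conj_mul_toFun_kernel_add_kernel1 (hJ : IsJ beta l J) (hβ : ‖beta‖ = 1) (hl : l ∈ 𝔻)
    (hu : u ∈ 𝔻) {k k1 : H2} (hk : ∀ v ∈ 𝔻, H2.toFun k v = 1 / (1 - conj w * v))
    (hk1 : ∀ v ∈ 𝔻, H2.toFun k1 v = v / (1 - conj w * v) ^ 2) (z c₀ c₁ : ℂ) :
    conj (beta * kappa l z) * (c₀ * H2.toFun (J k) u + c₁ * H2.toFun (J k1) u) =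
      conj (kappa l z) * kappa l u *
        (c₀ / (1 - w * phi l u) + c₁ * phi l u / (1 - w * phi l u) ^ 2) := by
  have hunit : conj beta * beta = 1 := by
    rw [mul_comm, mul_conj, normSq_eq_norm_sq, hβ]
    norm_num
  rw [hJ.toFun_kernel hl hu hk, hJ.toFun_kernel1 hl hu hk1, map_mul]
  linear_combination conj (kappa l z) * kappa l u *
    (c₀ / (1 - w * phi l u) + c₁ * phi l u / (1 - w * phi l u) ^ 2) * hunit

end

theorem stmt15_general (beta l : ℂ) (hβ : ‖beta‖ = 1) (hl : l ∈ 𝔻) (hl0 : l ≠ 0)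
    (ψ₀ ψ₁ : ℂ → ℂ)
    (J : H2 → H2) (hJ : IsJ beta l J)
    (K K1 : ℂ → H2)
    (hK : ∀ w ∈ 𝔻, ∀ u ∈ 𝔻, H2.toFun (K w) u = 1 / (1 - conj w * u))
    (hK1 : ∀ w ∈ 𝔻, ∀ u ∈ 𝔻, H2.toFun (K1 w) u = u / (1 - conj w * u) ^ 2)
    (hid : ∀ z ∈ 𝔻, ∀ u ∈ 𝔻,
      ψ₀ u / (1 - u * conj z) + ψ₁ u * conj z / (1 - u * conj z) ^ 2 =
        conj (beta * kappa l z) *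
          (ψ₀ (conj (phi l z)) * H2.toFun (J (K (conj (phi l z)))) u +
            ψ₁ (conj (phi l z)) * H2.toFun (J (K1 (conj (phi l z)))) u)) :
    ∃ a b c d : ℂ, d = -(l * b) / conj l - l * c ∧
      ∀ u ∈ 𝔻, ψ₀ u = a + b * u ∧ ψ₁ u = d + c * u + b * u ^ 2 := by
  have h0 : (0 : ℂ) ∈ 𝔻 := by simp
  have hQ : 1 - l * conj l ≠ 0 := one_sub_mul_conj_ne_zero hl hl
  have hQ' : 1 - conj l * l ≠ 0 := by rwa [mul_comm]
  have hl0' : conj l ≠ 0 := by simpa using hl0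
  have at_zero : ∀ u ∈ 𝔻,
      ψ₀ u * (l * (1 - l * conj l)) =
        ψ₀ l * (l * (1 - l * conj l)) + ψ₁ l * (conj l * (l - u)) := by
    intro u hu
    have hd := one_sub_mul_conj_ne_zero hu hl
    have hd' : 1 - conj l * u ≠ 0 := by rwa [mul_comm]
    have h := hid 0 h0 u hu
    rw [conj_phi_zero hl0, hJ.conj_mul_toFun_kernel_add_kernel1 hβ hl hu (hK l hl) (hK1 l hl),
      conj_kappa_mul_kappa hl, one_sub_mul_phi hl0 hd, phi_eq hl0 hd] at h
    simp only [map_zero, mul_zero, sub_zero, zero_div, add_zero, div_one] at h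
    field_simp at h
    linear_combination h
  have at_self : ∀ u ∈ 𝔻,
      ψ₁ u * (l * conj l) = (ψ₀ 0 - ψ₀ u) * l * (1 - u * conj l) + ψ₁ 0 * (conj l * (l - u)) := by
    intro u hu
    have hd := one_sub_mul_conj_ne_zero hu hl
    have hd' : 1 - conj l * u ≠ 0 := by rwa [mul_comm]
    have h := hid l hl u hu
    rw [phi_self, map_zero, hJ.conj_mul_toFun_kernel_add_kernel1 hβ hl hu (hK 0 h0) (hK1 0 h0),
      conj_kappa_mul_kappa hl, phi_eq hl0 hd] at h
    simp only [zero_mul, sub_zero, div_one, one_pow] at h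
    field_simp at h
    linear_combination h
  obtain ⟨b, hb⟩ : ∃ b, b * (l * (1 - l * conj l)) = -(conj l * ψ₁ l) :=
    ⟨_, div_mul_cancel₀ _ (mul_ne_zero hl0 hQ)⟩
  have affine : ∀ u ∈ 𝔻, ψ₀ u = ψ₀ l - l * b + b * u := fun u hu =>
    mul_right_cancel₀ (mul_ne_zero hl0 hQ) (by linear_combination at_zero u hu + (l - u) * hb)
  refine ⟨ψ₀ l - l * b, b, -ψ₁ 0 / l - b / conj l, ψ₁ 0, by field_simp; ring,
    fun u hu => ⟨affine u hu, ?_⟩⟩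
  field_simp
  linear_combination at_self u hu - l * (1 - u * conj l) * (affine u hu - affine 0 h0)

/-- if holomorphic `ψ₀, ψ₁` satisfy the kernel identity coming from
`ℰ_max K_z = J_{β,λ} ℰ_max* J_{β,λ} K_z`, then `ψ₀(u) = a + bu`, `ψ₁(u) = d + cu + bu²`
with `d = −λb/conj λ − λc`. -/
theorem stmt15 (beta l : ℂ) (hβ : ‖beta‖ = 1) (hl : l ∈ 𝔻) (hl0 : l ≠ 0)
    (ψ₀ ψ₁ : ℂ → ℂ)
    (hψ₀ : DifferentiableOn ℂ ψ₀ 𝔻) (hψ₁ : DifferentiableOn ℂ ψ₁ 𝔻)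
    (J : H2 → H2) (hJ : IsJ beta l J)
    (K K1 : ℂ → H2)
    (hK : ∀ w ∈ 𝔻, ∀ u ∈ 𝔻, H2.toFun (K w) u = 1 / (1 - conj w * u))
    (hK1 : ∀ w ∈ 𝔻, ∀ u ∈ 𝔻, H2.toFun (K1 w) u = u / (1 - conj w * u) ^ 2)
    (hid : ∀ z ∈ 𝔻, ∀ u ∈ 𝔻,
      ψ₀ u / (1 - u * conj z) + ψ₁ u * conj z / (1 - u * conj z) ^ 2 =
        conj (beta * kappa l z) *
          (ψ₀ (conj (phi l z)) * H2.toFun (J (K (conj (phi l z)))) u +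
            ψ₁ (conj (phi l z)) * H2.toFun (J (K1 (conj (phi l z)))) u)) :
    ∃ a b c d : ℂ, d = -(l * b) / conj l - l * c ∧
      ∀ u ∈ 𝔻, ψ₀ u = a + b * u ∧ ψ₁ u = d + c * u + b * u ^ 2 :=
  stmt15_general beta l hβ hl hl0 ψ₀ ψ₁ J hJ K K1 hK hK1 hid
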